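/- arXiv:1209.5229 — 3 statements merged into one kernel-verified Lean document; each statement's English description precedes it below -/
import Mathlib

section
/- Every group acting faithfully on the real line by orientation-preserving homeomorphisms is left-orderable. -/
/-!
Enumerate the rationals as `q₀, q₁, …` and compare `a, b ∈ G` by comparing the sequences
`(ρ a qₙ)ₙ` and `(ρ b qₙ)ₙ` lexicographically. Since a homeomorphism of `ℝ` is determined by its
values on the dense set `ℚ`, faithfulness makes this a linear order on `G`. Left multiplication
by `g` post-composes both sequences with the increasing map `ρ g`, which preserves the
lexicographic order.
-/

open Function

theorem Pi.Lex.strictMono_comp {ι α β : Type*} [LinearOrder ι] [PartialOrder α] [PartialOrder β]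
    {f : α → β} (hf : StrictMono f) :
    StrictMono fun x : Lex (ι → α) => toLex (f ∘ ofLex x) := by
  rintro x y ⟨i, h_eq, h_lt⟩
  exact ⟨i, fun j hj => congrArg f (h_eq j hj), hf h_lt⟩

theorem OrderIso.ext_rat {𝕜 : Type*} [Field 𝕜] [LinearOrder 𝕜] [IsStrictOrderedRing 𝕜]
    [Archimedean 𝕜] [TopologicalSpace 𝕜] [OrderTopology 𝕜] {f g : 𝕜 ≃o 𝕜}
    (h : ∀ q : ℚ, f q = g q) : f = g :=
  DFunLike.coe_injective <| Continuous.ext_on Rat.denseRange_cast f.continuous g.continuous <| by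
    rintro _ ⟨q, rfl⟩
    exact h q

theorem exists_mul_left_le_of_injective_orbit {G X ι : Type*} [Group G] [LinearOrder X]
    [LinearOrder ι] [WellFoundedLT ι] (ρ : G →* X ≃o X) (p : ι → X)
    (hp : Injective fun g => toLex fun i => ρ g (p i)) :
    ∃ lo : LinearOrder G, ∀ g a b : G, lo.le a b → lo.le (g * a) (g * b) := by
  refine ⟨LinearOrder.lift' _ hp, fun g a b hab => ?_⟩
  have h_mul : ∀ c, toLex (fun i => ρ (g * c) (p i)) = toLex (ρ g ∘ fun i => ρ c (p i)) :=
    fun c => congrArg toLex (funext fun i => by simp)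
  change toLex (fun i => ρ (g * a) (p i)) ≤ toLex (fun i => ρ (g * b) (p i))
  rw [h_mul, h_mul]
  exact (Pi.Lex.strictMono_comp (ρ g).strictMono).monotone hab

/-- Every group acting faithfully on the real line by orientation-preserving
homeomorphisms is left-orderable.  Orientation-preserving homeomorphisms of `ℝ` are exactly
the strictly increasing bijections `ℝ → ℝ` (continuity of such maps and their inverses is
automatic), i.e. the order-isomorphisms `ℝ ≃o ℝ`.  Left-orderable means: there is a linear
order on `G` invariant under left multiplication. -/
theorem stmt3 (G : Type*) [Group G] (ρ : G →* (ℝ ≃o ℝ))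
    (hfaithful : Function.Injective ρ) :
    ∃ lo : LinearOrder G, ∀ g a b : G, lo.le a b → lo.le (g * a) (g * b) := by
  let e : ℕ ≃ ℚ := (Denumerable.eqv ℚ).symm
  refine exists_mul_left_le_of_injective_orbit ρ (fun n => (e n : ℝ)) fun a b hab =>
    hfaithful <| OrderIso.ext_rat fun q => ?_
  simpa using congrFun (congrArg ofLex hab) (e.symm q)
end

section
/- Let J be a group and suppose there is a mean on J ∖ {e} invariant under a co-amenable subgroup K ≤ J. Then J is inner amenable, i.e., there is a conjugation-invariant mean on J ∖ {e}. -/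
/-!
Average the `K`-invariant mean over `J ⧸ K`: `m' A = ∫ m (g⁻¹ A g) dμ(gK)`. The integrand depends
only on the coset `gK` because `m` is invariant under conjugation by `K`, and conjugating `A` by
`g` translates the integrand by `g⁻¹`, which the `J`-invariant mean `μ` does not see.

Integration against a finitely additive probability `μ` is the upper integral over simple
functions. Bounded functions are uniform limits of simple functions, which makes this upper
integral additive and invariant under `μ`-preserving bijections.
-/

/-- A mean on the complement of the identity in a group `J`: a finitely additive
probability measure on `J ∖ {e}` (formalized on all subsets of `J`, giving `{e}` measure
zero and total mass one). -/
def IsMeanOffId {J : Type*} [Group J] (m : Set J → ℝ) : Prop :=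
  m Set.univ = 1 ∧ m {(1 : J)} = 0 ∧ (∀ A : Set J, 0 ≤ m A) ∧
    ∀ A B : Set J, Disjoint A B → m (A ∪ B) = m A + m B

open MeasureTheory Set

structure IsMean {X : Type*} (μ : Set X → ℝ) : Prop where
  univ : μ univ = 1
  nonneg : ∀ A, 0 ≤ μ A
  union : ∀ A B, Disjoint A B → μ (A ∪ B) = μ A + μ B

namespace IsMean

variable {X : Type*} {μ : Set X → ℝ}

lemma empty (h : IsMean μ) : μ ∅ = 0 := by
  simpa using h.union ∅ ∅ (disjoint_empty _)

lemma le_one (h : IsMean μ) (A : Set X) : μ A ≤ 1 := by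
  have := h.union A Aᶜ disjoint_compl_right
  rw [union_compl_self, h.univ] at this
  linarith [h.nonneg Aᶜ]

end IsMean

section MeanIntegral

variable {X : Type*} [MeasurableSpace X] {μ : Set X → ℝ}

local infixr:25 " →ₛ " => SimpleFunc

noncomputable def simpleMeanIntegral (μ : Set X → ℝ) (s : X →ₛ ℝ) : ℝ :=
  s.setToSimpleFunc fun A => μ A • (1 : ℝ →L[ℝ] ℝ)

-- `FinMeasAdditive` only constrains sets of finite measure; for the zero measure these are all
-- sets, so this is plain finite additivity.
lemma IsMean.finMeasAdditive (h : IsMean μ) :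
    FinMeasAdditive (0 : Measure X) fun A => μ A • (1 : ℝ →L[ℝ] ℝ) := by
  intro A B _ _ _ _ hAB
  simp only [h.union A B hAB, add_smul]

lemma simpleMeanIntegral_add (h : IsMean μ) (s t : X →ₛ ℝ) :
    simpleMeanIntegral μ (s + t) = simpleMeanIntegral μ s + simpleMeanIntegral μ t :=
  SimpleFunc.setToSimpleFunc_add _ h.finMeasAdditive integrable_zero_measure
    integrable_zero_measure

lemma simpleMeanIntegral_mono (h : IsMean μ) {s t : X →ₛ ℝ} (hst : s ≤ t) :
    simpleMeanIntegral μ s ≤ simpleMeanIntegral μ t :=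
  SimpleFunc.setToSimpleFunc_mono h.finMeasAdditive
    (fun A _ _ x hx => by simpa using mul_nonneg (h.nonneg A) hx)
    integrable_zero_measure integrable_zero_measure hst

lemma simpleMeanIntegral_const (h : IsMean μ) (c : ℝ) :
    simpleMeanIntegral μ (SimpleFunc.const X c) = c := by
  rw [simpleMeanIntegral, SimpleFunc.setToSimpleFunc_const _ (by simp [h.empty])]
  simp [h.univ]

lemma simpleMeanIntegral_comp [DiscreteMeasurableSpace X] (e : X ≃ X)
    (he : ∀ A, μ (e ⁻¹' A) = μ A) (s : X →ₛ ℝ) :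
    simpleMeanIntegral μ (s.comp e .of_discrete) = simpleMeanIntegral μ s := by
  have hrange : (s.comp e .of_discrete).range = s.range := by
    ext r
    simp only [SimpleFunc.mem_range, SimpleFunc.coe_comp, e.surjective.range_comp]
  simp only [simpleMeanIntegral, SimpleFunc.setToSimpleFunc, hrange, SimpleFunc.coe_comp,
    preimage_comp, he]

noncomputable def meanIntegral (μ : Set X → ℝ) (f : X → ℝ) : ℝ :=
  sInf (simpleMeanIntegral μ '' {s | f ≤ ⇑s})

lemma meanIntegral_le (h : IsMean μ) {f : X → ℝ} (hf : BddBelow (range f)) {s : X →ₛ ℝ}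
    (hfs : f ≤ ⇑s) : meanIntegral μ f ≤ simpleMeanIntegral μ s := by
  obtain ⟨a, ha⟩ := hf
  refine csInf_le ⟨a, ?_⟩ (mem_image_of_mem _ hfs)
  rintro _ ⟨t, hft, rfl⟩
  rw [← simpleMeanIntegral_const h a]
  exact simpleMeanIntegral_mono h fun x => (ha (mem_range_self x)).trans (hft x)

lemma le_meanIntegral (h : IsMean μ) {f : X → ℝ} (hf : BddAbove (range f)) {s : X →ₛ ℝ}
    (hsf : ⇑s ≤ f) : simpleMeanIntegral μ s ≤ meanIntegral μ f := by
  obtain ⟨b, hb⟩ := hf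
  refine le_csInf ⟨_, mem_image_of_mem _ (show f ≤ ⇑(SimpleFunc.const X b) from
    fun x => hb (mem_range_self x))⟩ ?_
  rintro _ ⟨t, hft, rfl⟩
  exact simpleMeanIntegral_mono h (hsf.trans hft)

lemma dist_meanIntegral_le (h : IsMean μ) {f : X → ℝ} {s : X →ₛ ℝ} {ε : ℝ}
    (hsf : ∀ x, s x ≤ f x) (hfs : ∀ x, f x ≤ s x + ε) :
    dist (meanIntegral μ f) (simpleMeanIntegral μ s) ≤ ε := by
  obtain ⟨a, ha⟩ := s.finite_range.bddBelow
  obtain ⟨b, hb⟩ := s.finite_range.bddAbove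
  have hlow := le_meanIntegral h ⟨b + ε, forall_mem_range.2 fun x =>
    (hfs x).trans (by linarith [hb (mem_range_self x)])⟩ hsf
  have hup := meanIntegral_le h ⟨a, forall_mem_range.2 fun x =>
    (ha (mem_range_self x)).trans (hsf x)⟩ (s := s + SimpleFunc.const X ε) hfs
  rw [simpleMeanIntegral_add h, simpleMeanIntegral_const h] at hup
  rw [Real.dist_eq, abs_le]
  constructor <;> linarith

lemma exists_simpleFunc_le_le_add [DiscreteMeasurableSpace X] {f : X → ℝ}
    (hf : BddAbove (range f)) (hf' : BddBelow (range f)) {ε : ℝ} (hε : 0 < ε) :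
    ∃ s : X →ₛ ℝ, ∀ x, s x ≤ f x ∧ f x ≤ s x + ε := by
  have hmono : Monotone fun y : ℝ => ⌊y / ε⌋ := fun y z hyz =>
    Int.floor_mono (div_le_div_of_nonneg_right hyz hε.le)
  have hfin : ((fun y => ⌊y / ε⌋) '' range f).Finite :=
    (hmono.map_bddBelow hf').finite_of_bddAbove (hmono.map_bddAbove hf)
  refine ⟨⟨fun x => ε * ⌊f x / ε⌋, fun _ => .of_discrete, ?_⟩, fun x => ⟨?_, ?_⟩⟩
  · refine (hfin.image fun n : ℤ => ε * n).subset ?_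
    rintro _ ⟨x, rfl⟩
    exact ⟨_, mem_image_of_mem _ (mem_range_self x), rfl⟩
  · have := Int.floor_le (f x / ε)
    rwa [le_div_iff₀' hε] at this
  · have := Int.lt_floor_add_one (f x / ε)
    rw [div_lt_iff₀' hε] at this
    simp only [SimpleFunc.coe_mk]
    linarith

lemma meanIntegral_const (h : IsMean μ) (c : ℝ) : meanIntegral μ (fun _ => c) = c := by
  have := dist_meanIntegral_le h (s := SimpleFunc.const X c) (f := fun _ => c) (ε := 0)
    (fun _ => le_rfl) (fun _ => by simp)
  rwa [dist_le_zero, simpleMeanIntegral_const h] at this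

lemma meanIntegral_nonneg (h : IsMean μ) {f : X → ℝ} (hf : BddAbove (range f)) (hf0 : 0 ≤ f) :
    0 ≤ meanIntegral μ f := by
  have := le_meanIntegral h hf (s := SimpleFunc.const X 0) hf0
  rwa [simpleMeanIntegral_const h] at this

lemma meanIntegral_add [DiscreteMeasurableSpace X] (h : IsMean μ) {f g : X → ℝ}
    (hf : BddAbove (range f)) (hf' : BddBelow (range f)) (hg : BddAbove (range g))
    (hg' : BddBelow (range g)) :
    meanIntegral μ (f + g) = meanIntegral μ f + meanIntegral μ g := by
  refine eq_of_forall_dist_le fun ε hε => ?_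
  obtain ⟨s, hs⟩ := exists_simpleFunc_le_le_add hf hf' (div_pos hε four_pos)
  obtain ⟨t, ht⟩ := exists_simpleFunc_le_le_add hg hg' (div_pos hε four_pos)
  have hdfg := dist_meanIntegral_le h (f := f + g) (s := s + t) (ε := ε / 4 + ε / 4)
    (fun x => add_le_add (hs x).1 (ht x).1) (fun x => by
      simp only [Pi.add_apply, SimpleFunc.coe_add]; linarith [(hs x).2, (ht x).2])
  have hdf := dist_meanIntegral_le h (fun x => (hs x).1) (fun x => (hs x).2)
  have hdg := dist_meanIntegral_le h (fun x => (ht x).1) (fun x => (ht x).2)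
  rw [simpleMeanIntegral_add h] at hdfg
  simp only [Real.dist_eq, abs_le] at hdfg hdf hdg ⊢
  constructor <;> linarith

lemma meanIntegral_comp [DiscreteMeasurableSpace X] (h : IsMean μ) (e : X ≃ X)
    (he : ∀ A, μ (e ⁻¹' A) = μ A) {f : X → ℝ} (hf : BddAbove (range f)) (hf' : BddBelow (range f)) :
    meanIntegral μ (f ∘ e) = meanIntegral μ f := by
  refine eq_of_forall_dist_le fun ε hε => ?_
  obtain ⟨s, hs⟩ := exists_simpleFunc_le_le_add hf hf' (half_pos hε)
  have hse := dist_meanIntegral_le h (f := f ∘ e) (s := s.comp e .of_discrete)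
    (fun x => (hs (e x)).1) (fun x => (hs (e x)).2)
  have hsf := dist_meanIntegral_le h (fun x => (hs x).1) (fun x => (hs x).2)
  rw [simpleMeanIntegral_comp e he] at hse
  simp only [Real.dist_eq, abs_le] at hse hsf ⊢
  constructor <;> linarith

end MeanIntegral

section Conjugation

variable {J : Type*} [Group J]

lemma isMeanOffId_iff {m : Set J → ℝ} : IsMeanOffId m ↔ IsMean m ∧ m {1} = 0 :=
  ⟨fun ⟨h1, h0, hn, ha⟩ => ⟨⟨h1, hn, ha⟩, h0⟩, fun ⟨⟨h1, hn, ha⟩, h0⟩ => ⟨h1, h0, hn, ha⟩⟩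

/-- The mass that `m` gives to `g⁻¹ A g`, as a function of the coset `gK`. -/
noncomputable def cosetConjMass (K : Subgroup J) (m : Set J → ℝ) (A : Set J) (q : J ⧸ K) : ℝ :=
  m ((fun x => q.out⁻¹ * x * q.out) '' A)

variable {K : Subgroup J} {m : Set J → ℝ}

lemma cosetConjMass_mk (hmK : ∀ k ∈ K, ∀ A : Set J, m ((fun x => k * x * k⁻¹) '' A) = m A)
    (A : Set J) (g : J) : cosetConjMass K m A (g : J ⧸ K) = m ((fun x => g⁻¹ * x * g) '' A) := by
  obtain ⟨k, hk⟩ := QuotientGroup.mk_out_eq_mul K g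
  have hconj : (fun x => (g * k)⁻¹ * x * (g * k)) '' A
      = (fun y => (k : J)⁻¹ * y * (k : J)⁻¹⁻¹) '' ((fun x => g⁻¹ * x * g) '' A) := by
    rw [image_image]
    congr! 1 with x
    group
  rw [cosetConjMass, hk, hconj, hmK _ (inv_mem k.2)]

lemma bddAbove_range_cosetConjMass (hm : IsMean m) (A : Set J) :
    BddAbove (range (cosetConjMass K m A)) :=
  ⟨1, forall_mem_range.2 fun _ => hm.le_one _⟩

lemma bddBelow_range_cosetConjMass (hm : IsMean m) (A : Set J) :
    BddBelow (range (cosetConjMass K m A)) :=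
  ⟨0, forall_mem_range.2 fun _ => hm.nonneg _⟩

lemma cosetConjMass_univ (hm : IsMean m) : cosetConjMass K m univ = fun _ => 1 := by
  ext q
  rw [cosetConjMass, image_univ_of_surjective fun y => ⟨q.out * y * q.out⁻¹, by group⟩,
    hm.univ]

lemma cosetConjMass_one (hm1 : m {1} = 0) : cosetConjMass K m {1} = fun _ => 0 := by
  ext q
  simp [cosetConjMass, hm1]

lemma cosetConjMass_union (hm : IsMean m) {A B : Set J} (hAB : Disjoint A B) :
    cosetConjMass K m (A ∪ B) = cosetConjMass K m A + cosetConjMass K m B := by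
  ext q
  rw [cosetConjMass, image_union]
  exact hm.union _ _ (hAB.image ((mul_left_injective _).comp (mul_right_injective _)).injOn
    (subset_univ _) (subset_univ _))

lemma cosetConjMass_conj (hmK : ∀ k ∈ K, ∀ A : Set J, m ((fun x => k * x * k⁻¹) '' A) = m A)
    (g : J) (A : Set J) :
    cosetConjMass K m ((fun x => g * x * g⁻¹) '' A) = cosetConjMass K m A ∘ (g⁻¹ • ·) := by
  ext q
  induction q using QuotientGroup.induction_on with | H h => ?_
  rw [Function.comp_apply, MulAction.Quotient.smul_coe, cosetConjMass_mk hmK,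
    cosetConjMass_mk hmK, image_image, smul_eq_mul]
  congr! 1 with x
  group

end Conjugation

section Averaging

variable {J : Type*} [Group J] {K : Subgroup J} [MeasurableSpace (J ⧸ K)]
  [DiscreteMeasurableSpace (J ⧸ K)] {μ : Set (J ⧸ K) → ℝ} {m : Set J → ℝ}

/-- `A ↦ ∫ m(g⁻¹ A g) dμ(gK)`. -/
noncomputable def averagedMean (μ : Set (J ⧸ K) → ℝ) (m : Set J → ℝ) (A : Set J) : ℝ :=
  meanIntegral μ (cosetConjMass K m A)

lemma isMeanOffId_averagedMean (hμ : IsMean μ) (hm : IsMeanOffId m) :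
    IsMeanOffId (averagedMean μ m) := by
  obtain ⟨hm, hm1⟩ := isMeanOffId_iff.1 hm
  refine isMeanOffId_iff.2 ⟨⟨?_, fun A => ?_, fun A B hAB => ?_⟩, ?_⟩
  · rw [averagedMean, cosetConjMass_univ hm, meanIntegral_const hμ]
  · exact meanIntegral_nonneg hμ (bddAbove_range_cosetConjMass hm A) fun _ => hm.nonneg _
  · rw [averagedMean, cosetConjMass_union hm hAB]
    exact meanIntegral_add hμ (bddAbove_range_cosetConjMass hm A)
      (bddBelow_range_cosetConjMass hm A) (bddAbove_range_cosetConjMass hm B)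
      (bddBelow_range_cosetConjMass hm B)
  · rw [averagedMean, cosetConjMass_one hm1, meanIntegral_const hμ]

lemma averagedMean_conj (hμ : IsMean μ)
    (hμJ : ∀ (g : J) (S : Set (J ⧸ K)), μ ((fun x => g • x) '' S) = μ S) (hm : IsMean m)
    (hmK : ∀ k ∈ K, ∀ A : Set J, m ((fun x => k * x * k⁻¹) '' A) = m A) (g : J) (A : Set J) :
    averagedMean μ m ((fun x => g * x * g⁻¹) '' A) = averagedMean μ m A := by
  rw [averagedMean, cosetConjMass_conj hmK]
  refine meanIntegral_comp hμ (MulAction.toPerm g⁻¹) (fun S => ?_)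
    (bddAbove_range_cosetConjMass hm A) (bddBelow_range_cosetConjMass hm A)
  change μ ((fun x => g⁻¹ • x) ⁻¹' S) = μ S
  rw [preimage_smul_inv, ← image_smul, hμJ]

end Averaging

/-- Let `J` be a group, `K ≤ J` a co-amenable subgroup (there is a
`J`-invariant mean on `J/K`).  If there is a mean on `J ∖ {e}` invariant under conjugation
by elements of `K`, then `J` is inner amenable: there is a mean on `J ∖ {e}` invariant
under conjugation by every element of `J`. -/
theorem stmt16 (J : Type*) [Group J] (K : Subgroup J)
    (hcoam : ∃ μ : Set (J ⧸ K) → ℝ,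
      (μ Set.univ = 1 ∧ (∀ A, 0 ≤ μ A) ∧
        ∀ A B, Disjoint A B → μ (A ∪ B) = μ A + μ B) ∧
      ∀ (g : J) (A : Set (J ⧸ K)), μ ((fun x => g • x) '' A) = μ A)
    (hK : ∃ m : Set J → ℝ, IsMeanOffId m ∧
      ∀ k ∈ K, ∀ A : Set J, m ((fun x => k * x * k⁻¹) '' A) = m A) :
    ∃ m : Set J → ℝ, IsMeanOffId m ∧
      ∀ (g : J) (A : Set J), m ((fun x => g * x * g⁻¹) '' A) = m A := by
  obtain ⟨μ, ⟨hμ1, hμ0, hμadd⟩, hμJ⟩ := hcoam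
  obtain ⟨m, hm, hmK⟩ := hK
  -- the discrete σ-algebra, so that every finite-valued function is simple
  let _ : MeasurableSpace (J ⧸ K) := ⊤
  have hμ : IsMean μ := ⟨hμ1, hμ0, hμadd⟩
  exact ⟨averagedMean μ m, isMeanOffId_averagedMean hμ hm,
    averagedMean_conj hμ hμJ (isMeanOffId_iff.1 hm).1 hmK⟩
end

section
/- The set of pairs (ξ₋, ξ₊) of repelling and attracting fixed points of hyperbolic elements of PSL(2,ℤ) is dense in ℙ¹(ℝ) × ℙ¹(ℝ) minus the diagonal. Equivalently, for any two disjoint non-empty open subsets U, V of ℙ¹(ℝ) there exists a hyperbolic element of PSL(2,ℤ) with repelling fixed point in U and attracting fixed point in V. -/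
/-!
Choose integer vectors `w₁ = (p, q)` with `[w₁] ∈ V` and `w₂ = (r, s)` with `[w₂] ∈ U`; since
`U ∩ V = ∅` they are independent, `d = ps - qr ≠ 0`. Let `P_w(n)` be the integral parabolic
element `v ↦ v + n det(w, v) w` fixing `[w]`. In the basis `w₁, w₂` the product
`g = P_{w₁}(n) P_{w₂}(n)` acts as `!![1 - k², k; -k, 1]` with `k = nd`, so `tr g = 2 - k²` and
`g` is hyperbolic once `|k| ≥ 3`. Its eigenvalues `λ ≈ -k²` and `λ⁻¹` have eigenvectors
`w₁ + k / (1 - λ) • w₂` and `w₂ + (1 - λ⁻¹) / k • w₁`, whose coefficients are `O(1 / |k|)`.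
Hence for `n` large the attracting fixed point is close to `[w₁] ∈ V` and the repelling one
to `[w₂] ∈ U`.
-/

open Matrix

noncomputable instance : TopologicalSpace (Projectivization ℝ (Fin 2 → ℝ)) :=
  instTopologicalSpaceQuotient

/-- The matrix of `v ↦ v + n (p v₁ - q v₀) • (p, q)`. -/
def parabolic {R : Type*} [CommRing R] (p q n : R) : Matrix (Fin 2) (Fin 2) R :=
  !![1 - n * p * q, n * p ^ 2; -(n * q ^ 2), 1 + n * p * q]

section parabolic

variable {R : Type*} [CommRing R]

@[simp]
lemma det_parabolic (p q n : R) : (parabolic p q n).det = 1 := by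
  rw [parabolic, det_fin_two_of]
  ring

lemma trace_parabolic_mul_parabolic (p q r s n : R) :
    (parabolic p q n * parabolic r s n).trace = 2 - (n * (p * s - q * r)) ^ 2 := by
  rw [parabolic, parabolic, mul_fin_two, trace_fin_two_of]
  ring

lemma map_intCast_parabolic (p q n : ℤ) :
    (parabolic p q n).map ((↑) : ℤ → R) = parabolic (p : R) q n := by
  ext i j
  fin_cases i <;> fin_cases j <;> simp [parabolic]

lemma parabolic_mul_parabolic_mulVec (p q r s n x y : R) :
    (parabolic p q n * parabolic r s n) *ᵥ (x • ![p, q] + y • ![r, s]) =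
      ((1 - (n * (p * s - q * r)) ^ 2) * x + n * (p * s - q * r) * y) • ![p, q] +
        (-(n * (p * s - q * r) * x) + y) • ![r, s] := by
  rw [parabolic, parabolic, mul_fin_two]
  simp only [smul_vec2, vec2_add, smul_eq_mul]
  ext i
  fin_cases i <;> simp [mulVec] <;> ring

end parabolic

lemma two_lt_abs_trace_parabolic_mul_parabolic {p q r s n : ℤ}
    (h : 2 < |n * (p * s - q * r)|) : 2 < |(parabolic p q n * parabolic r s n).trace| := by
  rw [trace_parabolic_mul_parabolic, abs_of_neg (by nlinarith [sq_abs (n * (p * s - q * r))])]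
  nlinarith [sq_abs (n * (p * s - q * r))]

lemma mulVec_eq_smul_of_root {K : Type*} [Field K] {p q r s n lam a b : K} (hk : n * (p * s - q * r) ≠ 0)
    (hlam : lam ^ 2 - (2 - (n * (p * s - q * r)) ^ 2) * lam + 1 = 0)
    (hab : n * (p * s - q * r) * a = (1 - lam) * b) :
    (parabolic p q n * parabolic r s n) *ᵥ (a • ![p, q] + b • ![r, s]) =
      lam • (a • ![p, q] + b • ![r, s]) := by
  set k := n * (p * s - q * r)
  rw [parabolic_mul_parabolic_mulVec, smul_add, smul_smul, smul_smul]
  congr 2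
  · apply mul_left_cancel₀ hk
    linear_combination b * hlam + (1 - k ^ 2 - lam) * hab
  · linear_combination -hab

lemma inv_sq_sub_mul_add_one {K : Type*} [Field K] {x t : K} (h : x ^ 2 - t * x + 1 = 0) :
    x⁻¹ ^ 2 - t * x⁻¹ + 1 = 0 := by
  have hx : x ≠ 0 := by
    rintro rfl
    norm_num at h
  field_simp
  linear_combination h

lemma exists_root_le_add_one {t : ℝ} (ht : t ≤ -2) :
    ∃ x : ℝ, x ^ 2 - t * x + 1 = 0 ∧ x ≤ t + 1 := by
  have hdisc : 0 ≤ t ^ 2 - 4 := by nlinarith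
  refine ⟨(t - √(t ^ 2 - 4)) / 2, ?_, ?_⟩
  · linear_combination (Real.sq_sqrt hdisc) / 4
  · nlinarith [Real.sq_sqrt hdisc, Real.sqrt_nonneg (t ^ 2 - 4)]

lemma exists_root_ratios_lt {δ k : ℝ} (hδ : 0 < δ) (hk : max 3 (3 / δ) ≤ |k|) :
    ∃ lam : ℝ, 1 < |lam| ∧ lam ^ 2 - (2 - k ^ 2) * lam + 1 = 0 ∧
      |k / (1 - lam)| < δ ∧ |(1 - lam⁻¹) / k| < δ := by
  have hk3 : 3 ≤ |k| := le_of_max_le_left hk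
  have hkδ : 3 ≤ δ * |k| := by
    have := le_of_max_le_right hk
    rwa [div_le_iff₀ hδ, mul_comm] at this
  have hksq : k ^ 2 = |k| ^ 2 := (sq_abs k).symm
  obtain ⟨lam, hroot, hle⟩ := exists_root_le_add_one (t := 2 - k ^ 2) (by nlinarith)
  have hlam : lam ≤ -6 := by nlinarith
  have hinv : -1 < lam⁻¹ ∧ lam⁻¹ < 0 :=
    ⟨(lt_inv_of_neg (by norm_num) (by linarith)).2 (by linarith), inv_lt_zero.2 (by linarith)⟩
  -- both ratios are at most `2 / |k|`, as `1 - lam ≥ k ^ 2 - 2` and `|1 - lam⁻¹| < 2`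
  refine ⟨lam, by rw [abs_of_neg (by linarith)]; linarith, hroot, ?_, ?_⟩
  · rw [abs_div, abs_of_pos (by linarith : 0 < 1 - lam), div_lt_iff₀ (by linarith)]
    nlinarith [mul_le_mul_of_nonneg_left (by nlinarith : |k| ^ 2 - 2 ≤ 1 - lam) hδ.le,
      mul_nonneg hδ.le (by nlinarith : 0 ≤ |k| ^ 2 - 9),
      mul_nonneg (by linarith : 0 ≤ δ * |k| - 3) (abs_nonneg k)]
  · rw [abs_div, div_lt_iff₀ (by linarith), abs_of_pos (by linarith : 0 < 1 - lam⁻¹)]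
    nlinarith

lemma exists_int_le_abs_mul {d : ℤ} (hd : d ≠ 0) (c : ℝ) : ∃ n : ℤ, c ≤ |(n : ℝ) * d| := by
  refine ⟨⌈c⌉, ?_⟩
  have hd1 : (1 : ℝ) ≤ |(d : ℝ)| := by exact_mod_cast Int.one_le_abs hd
  rw [abs_mul]
  nlinarith [Int.le_ceil c, le_abs_self (⌈c⌉ : ℝ), abs_nonneg (⌈c⌉ : ℝ)]

lemma mk_eq_mk_of_mul_sub_mul_eq_zero {K : Type*} [Field K] {p q r s : K} (hpq : ![p, q] ≠ 0)
    (hrs : ![r, s] ≠ 0) (h : p * s - q * r = 0) :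
    Projectivization.mk K ![p, q] hpq = Projectivization.mk K ![r, s] hrs := by
  rw [Projectivization.mk_eq_mk_iff']
  by_cases hr : r = 0
  · have hs : s ≠ 0 := by
      rintro rfl
      exact hrs (by simp [hr])
    have hp : p = 0 := by simpa [hr, hs] using h
    exact ⟨q / s, by ext i; fin_cases i <;> simp [hr, hp, hs]⟩
  · refine ⟨p / r, ?_⟩
    ext i
    fin_cases i
    · simp [hr]
    · simp only [Fin.mk_one, cons_val_one, cons_val_fin_one, Pi.smul_apply, smul_eq_mul]
      field_simp
      linear_combination h

lemma isOpen_setOf_mk_mem {W : Set (Projectivization ℝ (Fin 2 → ℝ))} (hW : IsOpen W) :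
    IsOpen {v : Fin 2 → ℝ | ∃ h : v ≠ 0, Projectivization.mk ℝ v h ∈ W} := by
  have hmk : Continuous fun v : {v : Fin 2 → ℝ // v ≠ 0} => Projectivization.mk ℝ v.1 v.2 :=
    continuous_quotient_mk'
  convert isOpen_compl_singleton.isOpenMap_subtype_val _ (hW.preimage hmk) using 1
  ext v
  exact ⟨fun ⟨h, hv⟩ => ⟨⟨v, h⟩, hv, rfl⟩, fun ⟨⟨_, h⟩, hv, hv'⟩ => hv' ▸ ⟨h, hv⟩⟩

lemma eventually_mk_add_smul_mem {W : Set (Projectivization ℝ (Fin 2 → ℝ))} (hW : IsOpen W)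
    {w : Fin 2 → ℝ} (hw : w ≠ 0) (hwW : Projectivization.mk ℝ w hw ∈ W) (w' : Fin 2 → ℝ) :
    ∀ᶠ ε in nhds (0 : ℝ), ∃ h : w + ε • w' ≠ 0, Projectivization.mk ℝ (w + ε • w') h ∈ W := by
  have hcont : Continuous fun ε : ℝ => w + ε • w' := by fun_prop
  exact hcont.continuousAt.preimage_mem_nhds
    ((isOpen_setOf_mk_mem hW).mem_nhds (by simpa using ⟨hw, hwW⟩))

lemma exists_int_mk_mem {W : Set (Projectivization ℝ (Fin 2 → ℝ))} (hW : IsOpen W)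
    (hne : W.Nonempty) :
    ∃ p q : ℤ, ∃ h : ![(p : ℝ), q] ≠ 0, Projectivization.mk ℝ ![(p : ℝ), q] h ∈ W := by
  obtain ⟨x, hx⟩ := hne
  have hdense : DenseRange (Pi.map fun _ : Fin 2 => ((↑) : ℚ → ℝ)) :=
    DenseRange.piMap fun _ => Rat.denseRange_cast
  obtain ⟨a, ha0, haW⟩ := hdense.exists_mem_open (isOpen_setOf_mk_mem hW)
    ⟨x.rep, x.rep_nonzero, by rwa [x.mk_rep]⟩
  have hden : ((a 0).den * (a 1).den : ℝ) ≠ 0 := by positivity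
  have hscale : ![(((a 0).num * (a 1).den : ℤ) : ℝ), (((a 1).num * (a 0).den : ℤ) : ℝ)] =
      ((a 0).den * (a 1).den : ℝ) • Pi.map (fun _ => ((↑) : ℚ → ℝ)) a := by
    ext i
    fin_cases i <;> simp [Rat.cast_def] <;> field_simp
  refine ⟨_, _, hscale ▸ smul_ne_zero hden ha0, ?_⟩
  convert haW using 1
  rw [Projectivization.mk_eq_mk_iff']
  exact ⟨_, hscale.symm⟩

/-- The pairs of (repelling, attracting) fixed points of hyperbolic elements
of `PSL(2,ℤ)` are dense in `ℙ¹(ℝ) × ℙ¹(ℝ)` off the diagonal: for any two disjoint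
non-empty open subsets `U, V` of `ℙ¹(ℝ)` there is a hyperbolic element of `PSL(2,ℤ)`
(a matrix `g ∈ SL(2,ℤ)` with `|trace g| > 2`) whose repelling fixed point (class of the
eigenvector with eigenvalue `λ⁻¹`, `|λ| > 1`) lies in `U` and whose attracting fixed point
(class of the eigenvector with eigenvalue `λ`) lies in `V`. -/
theorem stmt18 (U V : Set (Projectivization ℝ (Fin 2 → ℝ)))
    (hU : IsOpen U) (hV : IsOpen V) (hUne : U.Nonempty) (hVne : V.Nonempty)
    (hdisj : U ∩ V = ∅) :
    ∃ g : Matrix (Fin 2) (Fin 2) ℤ, g.det = 1 ∧ 2 < |g.trace| ∧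
      ∃ (vr va : Fin 2 → ℝ) (hvr : vr ≠ 0) (hva : va ≠ 0) (lam : ℝ),
        1 < |lam| ∧
        (g.map (Int.cast : ℤ → ℝ)).mulVec va = lam • va ∧
        (g.map (Int.cast : ℤ → ℝ)).mulVec vr = lam⁻¹ • vr ∧
        Projectivization.mk ℝ vr hvr ∈ U ∧
        Projectivization.mk ℝ va hva ∈ V := by
  obtain ⟨p, q, hpq, hpqV⟩ := exists_int_mk_mem hV hVne
  obtain ⟨r, s, hrs, hrsU⟩ := exists_int_mk_mem hU hUne
  have hd : p * s - q * r ≠ 0 := fun h => Set.eq_empty_iff_forall_notMem.1 hdisj _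
    ⟨mk_eq_mk_of_mul_sub_mul_eq_zero hpq hrs (by exact_mod_cast h) ▸ hrsU, hpqV⟩
  obtain ⟨δ, hδ, hnear⟩ := Metric.eventually_nhds_iff.1
    ((eventually_mk_add_smul_mem hV hpq hpqV ![r, s]).and
      (eventually_mk_add_smul_mem hU hrs hrsU ![p, q]))
  obtain ⟨n, hk⟩ := exists_int_le_abs_mul hd (max 3 (3 / δ))
  push_cast at hk
  have htrace : 2 < |(parabolic p q n * parabolic r s n).trace| :=
    two_lt_abs_trace_parabolic_mul_parabolic (by exact_mod_cast (le_max_left _ _).trans hk)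
  set k : ℝ := n * (p * s - q * r) with hk_def
  obtain ⟨lam, hlam, hroot, hεV, hεU⟩ := exists_root_ratios_lt hδ hk
  obtain ⟨hva, hvaV⟩ := (hnear (show dist (k / (1 - lam)) 0 < δ by rwa [Real.dist_0_eq_abs])).1
  obtain ⟨hvr, hvrU⟩ := (hnear (show dist ((1 - lam⁻¹) / k) 0 < δ by rwa [Real.dist_0_eq_abs])).2
  have hk0 : k ≠ 0 := abs_pos.1 (by linarith [le_max_left 3 (3 / δ)])
  have hlam1 : 1 - lam ≠ 0 := sub_ne_zero.2 (by rintro rfl; simp at hlam)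
  have hmap : (parabolic p q n * parabolic r s n).map (Int.cast : ℤ → ℝ) =
      parabolic (p : ℝ) q n * parabolic (r : ℝ) s n := by
    rw [map_mul_intCast, map_intCast_parabolic, map_intCast_parabolic]
  refine ⟨parabolic p q n * parabolic r s n, by simp, htrace, _, _, hvr, hva, lam, hlam, ?_, ?_,
    hvrU, hvaV⟩
  · rw [hmap]
    simpa using mulVec_eq_smul_of_root hk0 hroot (a := 1) (b := k / (1 - lam))
      (by rw [← hk_def]; field_simp)
  · rw [hmap, add_comm]
    simpa using mulVec_eq_smul_of_root hk0 (inv_sq_sub_mul_add_one hroot)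
      (a := (1 - lam⁻¹) / k) (b := 1) (by rw [← hk_def]; field_simp)
end
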